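/- arXiv:2402.14100 — 3 statements merged into one kernel-verified Lean document; each statement's English description precedes it below -/
import Mathlib

section
/- Assume E[∫_0^T S_t² dt] < ∞, E[|S_0|] < ∞, and that M_0 := E[∫_0^T S_u du | F_0] is square integrable. Let M_t := E[∫_0^T S_u du | F_t], and let N be a square-integrable martingale on [0,T] with N_0 = 0 a.s., E[∫_0^T N_t² dt] < ∞, and ∫_0^T N_t dt = M_T − M_0 almost surely. Define φ̂_t := −Φ_0/T + (1/Λ)(M_0/T + N_t − S_t). Then for every φ ∈ A_{Φ_0}, E[V^{Φ_0,φ}_T] ≤ E[V^{Φ_0,φ̂}_T]; that is, φ̂ maximizes the expected terminal wealth over A_{Φ_0}. -/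
open MeasureTheory Set
open scoped ENNReal

/-- The terminal wealth `V^{Φ₀,φ}_T = -Φ₀ S_0 - ∫_0^T φ_t S_t dt - (Λ/2) ∫_0^T φ_t² dt`. -/
noncomputable def wealth {Ω : Type*} (T Λ Φ₀ : ℝ) (S φ : ℝ → Ω → ℝ) (ω : Ω) : ℝ :=
  -Φ₀ * S 0 ω - (∫ t in Icc (0:ℝ) T, φ t ω * S t ω)
    - (Λ / 2) * ∫ t in Icc (0:ℝ) T, (φ t ω) ^ 2

/-- The admissible set `𝒜_{Φ₀}`: progressively measurable processes `φ` with
`∫_0^T φ_t² dt < ∞` a.s. and `Φ₀ + ∫_0^T φ_t dt = 0` a.s. -/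
def isAdmissible {Ω : Type*} {m0 : MeasurableSpace Ω} (T Φ₀ : ℝ)
    (ℱ : Filtration ℝ m0) (μ : Measure Ω) (φ : ℝ → Ω → ℝ) : Prop :=
  ProgMeasurable ℱ φ ∧
    (∀ᵐ ω ∂μ, IntegrableOn (fun t => (φ t ω) ^ 2) (Icc (0:ℝ) T)) ∧
    (∀ᵐ ω ∂μ, Φ₀ + ∫ t in Icc (0:ℝ) T, φ t ω = 0)

/-- The expectation of a real random variable as an extended real number:
`E[f] = ∫ f⁺ - ∫ f⁻ ∈ [-∞, +∞]`.  When the positive part is integrable this is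
well defined in `[-∞, ∞)`. -/
noncomputable def expEReal {Ω : Type*} {m0 : MeasurableSpace Ω}
    (μ : Measure Ω) (f : Ω → ℝ) : EReal :=
  ((∫⁻ ω, ENNReal.ofReal (f ω) ∂μ : ℝ≥0∞) : EReal)
    - ((∫⁻ ω, ENNReal.ofReal (-f ω) ∂μ : ℝ≥0∞) : EReal)

section Toolkit
variable {α : Type*} {mα : MeasurableSpace α} {μ : Measure α} {f g : α → ℝ}

private lemma abs_mul_le_half_sq (a b : ℝ) : |a * b| ≤ (a ^ 2 + b ^ 2) / 2 := by
  rcases abs_cases (a * b) with ⟨h, _⟩ | ⟨h, _⟩ <;> rw [h] <;>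
    nlinarith [sq_nonneg (a - b), sq_nonneg (a + b)]

private lemma young_ineq {Λ : ℝ} (hΛ : 0 < Λ) (a b : ℝ) :
    |a * b| ≤ Λ / 4 * a ^ 2 + 1 / Λ * b ^ 2 := by
  have k1 : Λ / 4 * a ^ 2 + 1 / Λ * b ^ 2 - a * b = 1 / (4 * Λ) * (Λ * a - 2 * b) ^ 2 := by
    field_simp; ring
  have k2 : Λ / 4 * a ^ 2 + 1 / Λ * b ^ 2 + a * b = 1 / (4 * Λ) * (Λ * a + 2 * b) ^ 2 := by
    field_simp; ring
  have p1 : (0:ℝ) ≤ 1 / (4 * Λ) * (Λ * a - 2 * b) ^ 2 := by positivity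
  have p2 : (0:ℝ) ≤ 1 / (4 * Λ) * (Λ * a + 2 * b) ^ 2 := by positivity
  exact abs_le.2 ⟨by linarith, by linarith⟩

private lemma int_mul_of_sq (hf : AEStronglyMeasurable f μ) (hg : AEStronglyMeasurable g μ)
    (hf2 : Integrable (fun x => f x ^ 2) μ) (hg2 : Integrable (fun x => g x ^ 2) μ) :
    Integrable (fun x => f x * g x) μ := by
  refine Integrable.mono' ((hf2.add hg2).div_const 2) (hf.mul hg) ?_
  filter_upwards with x
  rw [Real.norm_eq_abs]
  simp only [Pi.add_apply]
  exact abs_mul_le_half_sq _ _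

private lemma int_of_sq [IsFiniteMeasure μ] (hf : AEStronglyMeasurable f μ)
    (hf2 : Integrable (fun x => f x ^ 2) μ) : Integrable f μ := by
  refine Integrable.mono' (((integrable_const (1:ℝ)).add hf2).div_const 2) hf ?_
  filter_upwards with x
  rw [Real.norm_eq_abs]
  simp only [Pi.add_apply]
  nlinarith [sq_nonneg (|f x| - 1), sq_abs (f x), abs_nonneg (f x)]

private lemma sq_int_add (hf : AEStronglyMeasurable f μ) (hg : AEStronglyMeasurable g μ)
    (hf2 : Integrable (fun x => f x ^ 2) μ) (hg2 : Integrable (fun x => g x ^ 2) μ) :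
    Integrable (fun x => (f x + g x) ^ 2) μ := by
  have h := (hf2.add hg2).add ((int_mul_of_sq hf hg hf2 hg2).const_mul 2)
  refine h.congr (Filter.Eventually.of_forall fun x => ?_)
  simp only [Pi.add_apply, Pi.sub_apply]
  ring

private lemma sq_int_sub (hf : AEStronglyMeasurable f μ) (hg : AEStronglyMeasurable g μ)
    (hf2 : Integrable (fun x => f x ^ 2) μ) (hg2 : Integrable (fun x => g x ^ 2) μ) :
    Integrable (fun x => (f x - g x) ^ 2) μ := by
  have h := (hf2.add hg2).sub ((int_mul_of_sq hf hg hf2 hg2).const_mul 2)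
  refine h.congr (Filter.Eventually.of_forall fun x => ?_)
  simp only [Pi.add_apply, Pi.sub_apply]
  ring

private lemma sq_int_const_mul (c : ℝ) (hf2 : Integrable (fun x => f x ^ 2) μ) :
    Integrable (fun x => (c * f x) ^ 2) μ := by
  refine (hf2.const_mul (c ^ 2)).congr (Filter.Eventually.of_forall fun x => ?_)
  ring

private lemma lintegral_ofReal_lt_top_of_integrable' (hf : Integrable f μ) :
    ∫⁻ x, ENNReal.ofReal (f x) ∂μ < ⊤ := by
  refine lt_of_le_of_lt (lintegral_mono fun x => ?_) hf.2
  calc ENNReal.ofReal (f x) ≤ ENNReal.ofReal |f x| := ENNReal.ofReal_le_ofReal (le_abs_self _)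
    _ = (‖f x‖₊ : ℝ≥0∞) := by rw [← Real.nnnorm_abs, ← enorm_eq_nnnorm, Real.enorm_eq_ofReal (abs_nonneg _)]

private lemma expEReal_of_integrable' (hf : Integrable f μ) :
    expEReal μ f = ((∫ x, f x ∂μ : ℝ) : EReal) := by
  have h1 := (lintegral_ofReal_lt_top_of_integrable' hf).ne
  have h2 : (∫⁻ x, ENNReal.ofReal (-f x) ∂μ) ≠ ⊤ := by
    have := (lintegral_ofReal_lt_top_of_integrable' hf.neg).ne
    simpa using this
  rw [expEReal, integral_eq_lintegral_pos_part_sub_lintegral_neg_part hf]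
  rw [← ENNReal.ofReal_toReal h1, ← ENNReal.ofReal_toReal h2,
    EReal.coe_ennreal_ofReal, EReal.coe_ennreal_ofReal,
    max_eq_left ENNReal.toReal_nonneg, max_eq_left ENNReal.toReal_nonneg,
    ← EReal.coe_sub]
  rw [ENNReal.ofReal_toReal h1, ENNReal.ofReal_toReal h2]

private lemma expEReal_eq_bot' (h : ∫⁻ x, ENNReal.ofReal (-f x) ∂μ = ⊤) :
    expEReal μ f = ⊥ := by
  rw [expEReal, h, EReal.coe_ennreal_top]
  exact EReal.sub_top _

end Toolkit

section ProgTools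
variable {Ω : Type*} {m0 : MeasurableSpace Ω} {μ : Measure Ω}

private lemma prog_aesm [SFinite μ] {ℱ : Filtration ℝ m0} {X : ℝ → Ω → ℝ}
    (hX : ProgMeasurable ℱ X) (T : ℝ) :
    AEStronglyMeasurable (fun p : ℝ × Ω => X p.1 p.2)
      ((volume.restrict (Icc (0:ℝ) T)).prod μ) := by
  have h1 := hX T
  have hle : (Subtype.instMeasurableSpace.prod (ℱ T) : MeasurableSpace (Set.Iic T × Ω))
      ≤ Prod.instMeasurableSpace :=
    sup_le_sup le_rfl (MeasurableSpace.comap_mono (ℱ.le T))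
  have h2 : StronglyMeasurable (fun p : Set.Iic T × Ω => X p.1 p.2) := h1.mono hle
  have hr : Measurable (fun p : ℝ × Ω =>
      ((⟨min p.1 T, Set.mem_Iic.2 (min_le_right _ _)⟩ : Set.Iic T), p.2)) :=
    ((measurable_fst.min measurable_const).subtype_mk).prodMk measurable_snd
  have h3 : StronglyMeasurable (fun p : ℝ × Ω => X (min p.1 T) p.2) := h2.comp_measurable hr
  refine h3.aestronglyMeasurable.congr ?_
  have hnull : ((volume.restrict (Icc (0:ℝ) T)).prod μ) ((Icc (0:ℝ) T)ᶜ ×ˢ univ) = 0 := by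
    rw [Measure.prod_prod, Measure.restrict_apply measurableSet_Icc.compl]
    simp
  rw [Filter.EventuallyEq, ae_iff]
  refine measure_mono_null (fun p hp => ?_) hnull
  simp only [mem_setOf_eq] at hp
  simp only [mem_prod, mem_compl_iff, mem_univ, and_true]
  intro hmem
  exact hp (by rw [min_eq_left hmem.2])

private lemma sm_integral_proc {ℱ : Filtration ℝ m0} {X : ℝ → Ω → ℝ}
    (hX : ProgMeasurable ℱ X) (T : ℝ) :
    StronglyMeasurable[ℱ T] (fun ω => ∫ t in Icc (0:ℝ) T, X t ω) := by
  have h1 := hX T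
  have hr : @Measurable (Ω × ℝ) (Set.Iic T × Ω) ((ℱ T).prod inferInstance)
      (Subtype.instMeasurableSpace.prod (ℱ T))
      (fun q => (⟨min q.2 T, Set.mem_Iic.2 (min_le_right _ _)⟩, q.1)) := by
    exact Measurable.prodMk ((measurable_snd.min measurable_const).subtype_mk) measurable_fst
  have h2 : StronglyMeasurable[(ℱ T).prod inferInstance]
      (fun q : Ω × ℝ => X (min q.2 T) q.1) := h1.comp_measurable hr
  have h3 := @StronglyMeasurable.integral_prod_right' Ω ℝ ℝ (ℱ T) _
      (volume.restrict (Icc (0:ℝ) T)) _ _ _ _ h2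
  have heq : (fun ω => ∫ t in Icc (0:ℝ) T, X t ω)
      = fun ω => ∫ t in Icc (0:ℝ) T, X (min t T) ω := by
    funext ω
    refine setIntegral_congr_fun measurableSet_Icc fun t ht => ?_
    rw [min_eq_left ht.2]
  rw [heq]
  exact h3

end ProgTools

/-- In the setting of Statement 6, the strategy
`φ̂_t := -Φ₀/T + (1/Λ)(M₀/T + N_t - S_t)` maximizes the expected terminal wealth:
for every `φ ∈ 𝒜_{Φ₀}`, `E[V^{Φ₀,φ}_T] ≤ E[V^{Φ₀,φ̂}_T]` (the expectations being
well defined in `[-∞,∞)`). -/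
theorem stmt_7
    {Ω : Type*} {m0 : MeasurableSpace Ω} {μ : Measure Ω} [IsProbabilityMeasure μ]
    (T : ℝ) (hT : 0 < T) (Λ : ℝ) (hΛ : 0 < Λ) (Φ₀ : ℝ)
    (ℱ : Filtration ℝ m0)
    (S : ℝ → Ω → ℝ)
    (hprog : ProgMeasurable ℱ S)
    (hS2 : ∫⁻ ω, (∫⁻ t in Icc (0:ℝ) T, ENNReal.ofReal ((S t ω) ^ 2)) ∂μ < ⊤)
    (hS0 : Integrable (S 0) μ)
    -- `M₀ = E[∫_0^T S_u du | ℱ_0]` is square integrable,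
    -- `M_T = E[∫_0^T S_u du | ℱ_T]`:
    (M₀ MT : Ω → ℝ)
    (hM₀ : M₀ = μ[(fun ω => ∫ t in Icc (0:ℝ) T, S t ω) | ℱ 0])
    (hMT : MT = μ[(fun ω => ∫ t in Icc (0:ℝ) T, S t ω) | ℱ T])
    (hM₀2 : Integrable (fun ω => (M₀ ω) ^ 2) μ)
    -- `N` is a progressively measurable square-integrable martingale with `N_0 = 0`,
    -- `E[∫_0^T N_t² dt] < ∞` and `∫_0^T N_t dt = M_T - M₀` a.s.:
    (N : ℝ → Ω → ℝ)
    (hNprog : ProgMeasurable ℱ N)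
    (hNT2 : Integrable (fun ω => (N T ω) ^ 2) μ)
    (hNmart : ∀ t ∈ Icc (0:ℝ) T, N t =ᵐ[μ] μ[N T | ℱ t])
    (hN0 : N 0 =ᵐ[μ] fun _ => 0)
    (hN2 : ∫⁻ ω, (∫⁻ t in Icc (0:ℝ) T, ENNReal.ofReal ((N t ω) ^ 2)) ∂μ < ⊤)
    (hNint : ∀ᵐ ω ∂μ, ∫ t in Icc (0:ℝ) T, N t ω = MT ω - M₀ ω)
    -- the candidate optimal strategy:
    (φopt : ℝ → Ω → ℝ)
    (hφopt : φopt = fun t ω => -Φ₀ / T + (1 / Λ) * (M₀ ω / T + N t ω - S t ω)) :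
    ∀ φ : ℝ → Ω → ℝ, isAdmissible T Φ₀ ℱ μ φ →
      expEReal μ (wealth T Λ Φ₀ S φ) ≤ expEReal μ (wealth T Λ Φ₀ S φopt) := by
  intro φ hφ
  obtain ⟨hφprog, hφsq, hφcon⟩ := hφ
  have hTne : T ≠ 0 := hT.ne'
  have hΛne : Λ ≠ 0 := hΛ.ne'
  -- notation
  have hνfin : IsFiniteMeasure (volume.restrict (Icc (0:ℝ) T)) :=
    ⟨by rw [Measure.restrict_apply_univ, Real.volume_Icc]; exact ENNReal.ofReal_lt_top⟩
  have hφoptdef : ∀ t ω, φopt t ω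
      = -Φ₀ / T + 1 / (Λ * T) * M₀ ω + (1 / Λ) * N t ω - (1 / Λ) * S t ω := by
    intro t ω; rw [hφopt]; field_simp; ring
  -- joint a.e.-strong measurability
  have hSasm : AEStronglyMeasurable (fun p : ℝ × Ω => S p.1 p.2)
      ((volume.restrict (Icc (0:ℝ) T)).prod μ) := prog_aesm hprog T
  have hNasm : AEStronglyMeasurable (fun p : ℝ × Ω => N p.1 p.2)
      ((volume.restrict (Icc (0:ℝ) T)).prod μ) := prog_aesm hNprog T
  have hφasm : AEStronglyMeasurable (fun p : ℝ × Ω => φ p.1 p.2)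
      ((volume.restrict (Icc (0:ℝ) T)).prod μ) := prog_aesm hφprog T
  have hM₀sm : StronglyMeasurable M₀ := by
    rw [hM₀]; exact stronglyMeasurable_condExp.mono (ℱ.le 0)
  have hM₀asm : AEStronglyMeasurable (fun p : ℝ × Ω => M₀ p.2)
      ((volume.restrict (Icc (0:ℝ) T)).prod μ) :=
    hM₀sm.aestronglyMeasurable.comp_snd
  have hOptasm : AEStronglyMeasurable (fun p : ℝ × Ω => φopt p.1 p.2)
      ((volume.restrict (Icc (0:ℝ) T)).prod μ) := by
    have : AEStronglyMeasurable (fun p : ℝ × Ω =>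
        -Φ₀ / T + 1 / (Λ * T) * M₀ p.2 + (1 / Λ) * N p.1 p.2 - (1 / Λ) * S p.1 p.2)
        ((volume.restrict (Icc (0:ℝ) T)).prod μ) :=
      ((aestronglyMeasurable_const.add (hM₀asm.const_mul _)).add
        (hNasm.const_mul _)).sub (hSasm.const_mul _)
    exact this.congr (Filter.Eventually.of_forall fun p => (hφoptdef p.1 p.2).symm)
  -- square-integrability on the product space
  have mkSq : ∀ X : ℝ → Ω → ℝ,
      AEStronglyMeasurable (fun p : ℝ × Ω => X p.1 p.2)
        ((volume.restrict (Icc (0:ℝ) T)).prod μ) →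
      (∫⁻ ω, (∫⁻ t in Icc (0:ℝ) T, ENNReal.ofReal ((X t ω) ^ 2)) ∂μ < ⊤) →
      Integrable (fun p : ℝ × Ω => (X p.1 p.2) ^ 2)
        ((volume.restrict (Icc (0:ℝ) T)).prod μ) := by
    intro X hasm h2
    have hsq_asm : AEStronglyMeasurable (fun p : ℝ × Ω => (X p.1 p.2) ^ 2)
        ((volume.restrict (Icc (0:ℝ) T)).prod μ) :=
      (hasm.mul hasm).congr (Filter.Eventually.of_forall fun p => (pow_two _).symm)
    refine ⟨hsq_asm, ?_⟩
    rw [hasFiniteIntegral_iff_ofReal (Filter.Eventually.of_forall fun p => sq_nonneg _)]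
    have hmeas : AEMeasurable (fun p : ℝ × Ω => ENNReal.ofReal ((X p.1 p.2) ^ 2))
        ((volume.restrict (Icc (0:ℝ) T)).prod μ) :=
      ENNReal.measurable_ofReal.comp_aemeasurable hsq_asm.aemeasurable
    rw [lintegral_prod_symm _ hmeas]
    exact h2
  have hsqS : Integrable (fun p : ℝ × Ω => (S p.1 p.2) ^ 2)
      ((volume.restrict (Icc (0:ℝ) T)).prod μ) := mkSq S hSasm hS2
  have hsqN : Integrable (fun p : ℝ × Ω => (N p.1 p.2) ^ 2)
      ((volume.restrict (Icc (0:ℝ) T)).prod μ) := mkSq N hNasm hN2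
  have hsqM₀ : Integrable (fun p : ℝ × Ω => (M₀ p.2) ^ 2)
      ((volume.restrict (Icc (0:ℝ) T)).prod μ) := by
    have := (integrable_const (1:ℝ)).mul_prod hM₀2
      (μ := volume.restrict (Icc (0:ℝ) T)) (ν := μ)
    simpa using this
  have hsqNT : Integrable (fun p : ℝ × Ω => (N T p.2) ^ 2)
      ((volume.restrict (Icc (0:ℝ) T)).prod μ) := by
    have := (integrable_const (1:ℝ)).mul_prod hNT2
      (μ := volume.restrict (Icc (0:ℝ) T)) (ν := μ)
    simpa using this
  have hsqOpt : Integrable (fun p : ℝ × Ω => (φopt p.1 p.2) ^ 2)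
      ((volume.restrict (Icc (0:ℝ) T)).prod μ) := by
    have a1 : AEStronglyMeasurable (fun p : ℝ × Ω => -Φ₀ / T + 1 / (Λ * T) * M₀ p.2)
        ((volume.restrict (Icc (0:ℝ) T)).prod μ) :=
      aestronglyMeasurable_const.add (hM₀asm.const_mul _)
    have t1 : Integrable (fun p : ℝ × Ω => (-Φ₀ / T + 1 / (Λ * T) * M₀ p.2) ^ 2)
        ((volume.restrict (Icc (0:ℝ) T)).prod μ) :=
      sq_int_add aestronglyMeasurable_const (hM₀asm.const_mul _)
        (by simpa using integrable_const ((-Φ₀ / T) ^ 2)) (sq_int_const_mul _ hsqM₀)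
    have a2 : AEStronglyMeasurable
        (fun p : ℝ × Ω => -Φ₀ / T + 1 / (Λ * T) * M₀ p.2 + 1 / Λ * N p.1 p.2)
        ((volume.restrict (Icc (0:ℝ) T)).prod μ) := a1.add (hNasm.const_mul _)
    have t2 : Integrable
        (fun p : ℝ × Ω => (-Φ₀ / T + 1 / (Λ * T) * M₀ p.2 + 1 / Λ * N p.1 p.2) ^ 2)
        ((volume.restrict (Icc (0:ℝ) T)).prod μ) :=
      sq_int_add a1 (hNasm.const_mul _) t1 (sq_int_const_mul _ hsqN)
    have t3 : Integrable (fun p : ℝ × Ω =>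
        (-Φ₀ / T + 1 / (Λ * T) * M₀ p.2 + 1 / Λ * N p.1 p.2 - 1 / Λ * S p.1 p.2) ^ 2)
        ((volume.restrict (Icc (0:ℝ) T)).prod μ) :=
      sq_int_sub a2 (hSasm.const_mul _) t2 (sq_int_const_mul _ hsqS)
    refine t3.congr (Filter.Eventually.of_forall fun p => ?_)
    simp only [hφoptdef]
  -- slices
  have hSslice2 : ∀ᵐ ω ∂μ, Integrable (fun t => (S t ω) ^ 2) (volume.restrict (Icc (0:ℝ) T)) :=
    hsqS.prod_left_ae
  have hNslice2 : ∀ᵐ ω ∂μ, Integrable (fun t => (N t ω) ^ 2) (volume.restrict (Icc (0:ℝ) T)) :=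
    hsqN.prod_left_ae
  have hOptslice2 : ∀ᵐ ω ∂μ, Integrable (fun t => (φopt t ω) ^ 2)
      (volume.restrict (Icc (0:ℝ) T)) := hsqOpt.prod_left_ae
  have hSsliceasm : ∀ᵐ ω ∂μ, AEStronglyMeasurable (fun t => S t ω)
      (volume.restrict (Icc (0:ℝ) T)) := hSasm.prod_swap.prodMk_left
  have hNsliceasm : ∀ᵐ ω ∂μ, AEStronglyMeasurable (fun t => N t ω)
      (volume.restrict (Icc (0:ℝ) T)) := hNasm.prod_swap.prodMk_left
  have hφsliceasm : ∀ᵐ ω ∂μ, AEStronglyMeasurable (fun t => φ t ω)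
      (volume.restrict (Icc (0:ℝ) T)) := hφasm.prod_swap.prodMk_left
  have hOptsliceasm : ∀ᵐ ω ∂μ, AEStronglyMeasurable (fun t => φopt t ω)
      (volume.restrict (Icc (0:ℝ) T)) := hOptasm.prod_swap.prodMk_left
  -- MT is a.e. the terminal integral
  have hMTeq : MT =ᵐ[μ] fun ω => ∫ t in Icc (0:ℝ) T, S t ω := by
    have hISsm : StronglyMeasurable[ℱ T] (fun ω => ∫ t in Icc (0:ℝ) T, S t ω) :=
      sm_integral_proc hprog T
    have hSint1 : Integrable (fun p : ℝ × Ω => S p.1 p.2)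
        ((volume.restrict (Icc (0:ℝ) T)).prod μ) := int_of_sq hSasm hsqS
    have hISint : Integrable (fun ω => ∫ t in Icc (0:ℝ) T, S t ω) μ :=
      hSint1.integral_prod_right
    rw [hMT]
    exact condExp_of_aestronglyMeasurable' (ℱ.le T) hISsm.aestronglyMeasurable hISint
  -- the candidate is admissible
  have hvolT : ((volume.restrict (Icc (0:ℝ) T)) univ).toReal = T := by
    rw [Measure.restrict_apply_univ, Real.volume_Icc, sub_zero, ENNReal.toReal_ofReal hT.le]
  have hOptcon : ∀ᵐ ω ∂μ, ∫ t in Icc (0:ℝ) T, φopt t ω = -Φ₀ := by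
    filter_upwards [hNint, hMTeq, hSslice2, hNslice2, hSsliceasm, hNsliceasm] with ω
      hNi hMTω hiS2 hiN2 haS haN
    have hiS1 : Integrable (fun t => S t ω) (volume.restrict (Icc (0:ℝ) T)) := int_of_sq haS hiS2
    have hiN1 : Integrable (fun t => N t ω) (volume.restrict (Icc (0:ℝ) T)) := int_of_sq haN hiN2
    have e : ∫ t in Icc (0:ℝ) T, φopt t ω
        = ∫ t in Icc (0:ℝ) T, ((-Φ₀ / T + 1 / (Λ * T) * M₀ ω)
            + ((1 / Λ) * N t ω - (1 / Λ) * S t ω)) := by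
      refine integral_congr_ae (Filter.Eventually.of_forall fun t => ?_)
      simp only [hφoptdef]; ring
    have hrest : Integrable (fun t => 1 / Λ * N t ω - 1 / Λ * S t ω)
        (volume.restrict (Icc (0:ℝ) T)) := (hiN1.const_mul _).sub (hiS1.const_mul _)
    rw [e, integral_add (integrable_const (-Φ₀ / T + 1 / (Λ * T) * M₀ ω)) hrest,
      integral_sub (hiN1.const_mul (1 / Λ)) (hiS1.const_mul (1 / Λ)),
      integral_const_mul, integral_const_mul, integral_const, smul_eq_mul, measureReal_def, hvolT,
      hNi, hMTω]
    field_simp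
    ring
  -- main pointwise facts
  have main : ∀ᵐ ω ∂μ,
      (wealth T Λ Φ₀ S φ ω = wealth T Λ Φ₀ S φopt ω
        - (∫ t in Icc (0:ℝ) T, (φ t ω - φopt t ω) * N t ω)
        - (Λ / 2) * ∫ t in Icc (0:ℝ) T, (φ t ω - φopt t ω) ^ 2)
      ∧ Integrable (fun t => (φ t ω - φopt t ω) ^ 2) (volume.restrict (Icc (0:ℝ) T))
      ∧ (∫ t in Icc (0:ℝ) T, (φ t ω - φopt t ω)) = 0
      ∧ wealth T Λ Φ₀ S φ ω ≤ wealth T Λ Φ₀ S φopt ω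
          + (1 / Λ) * (∫ t in Icc (0:ℝ) T, (N t ω) ^ 2)
          - (Λ / 4) * ∫ t in Icc (0:ℝ) T, (φ t ω - φopt t ω) ^ 2 := by
    filter_upwards [hφsq, hφcon, hOptcon, hSslice2, hNslice2, hOptslice2, hSsliceasm,
      hNsliceasm, hφsliceasm, hOptsliceasm] with ω hiφ2 hconω hoptconω hiS2 hiN2 hiOpt2
      haS haN haφ haOpt
    have hiφ2' : Integrable (fun t => (φ t ω) ^ 2) (volume.restrict (Icc (0:ℝ) T)) := hiφ2
    have haη : AEStronglyMeasurable (fun t => φ t ω - φopt t ω)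
        (volume.restrict (Icc (0:ℝ) T)) := haφ.sub haOpt
    have hiη2 : Integrable (fun t => (φ t ω - φopt t ω) ^ 2)
        (volume.restrict (Icc (0:ℝ) T)) := sq_int_sub haφ haOpt hiφ2' hiOpt2
    have hiφS := int_mul_of_sq haφ haS hiφ2' hiS2
    have hiOptS := int_mul_of_sq haOpt haS hiOpt2 hiS2
    have hiηS := int_mul_of_sq haη haS hiη2 hiS2
    have hiηN := int_mul_of_sq haη haN hiη2 hiN2
    have hiηOpt := int_mul_of_sq haη haOpt hiη2 hiOpt2
    have hiφ1 : Integrable (fun t => φ t ω) (volume.restrict (Icc (0:ℝ) T)) :=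
      int_of_sq haφ hiφ2'
    have hiOpt1 : Integrable (fun t => φopt t ω) (volume.restrict (Icc (0:ℝ) T)) :=
      int_of_sq haOpt hiOpt2
    have hiη1 : Integrable (fun t => φ t ω - φopt t ω) (volume.restrict (Icc (0:ℝ) T)) :=
      hiφ1.sub hiOpt1
    have hη0 : (∫ t in Icc (0:ℝ) T, (φ t ω - φopt t ω)) = 0 := by
      rw [integral_sub hiφ1 hiOpt1, hoptconω]
      linarith [hconω]
    -- e3 : ∫ η * φopt
    have e3 : (∫ t in Icc (0:ℝ) T, (φ t ω - φopt t ω) * φopt t ω)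
        = (1 / Λ) * (∫ t in Icc (0:ℝ) T, (φ t ω - φopt t ω) * N t ω)
          - (1 / Λ) * (∫ t in Icc (0:ℝ) T, (φ t ω - φopt t ω) * S t ω) := by
      have e3a : (∫ t in Icc (0:ℝ) T, (φ t ω - φopt t ω) * φopt t ω)
          = ∫ t in Icc (0:ℝ) T, ((-Φ₀ / T + 1 / (Λ * T) * M₀ ω) * (φ t ω - φopt t ω)
            + (1 / Λ * ((φ t ω - φopt t ω) * N t ω)
              - 1 / Λ * ((φ t ω - φopt t ω) * S t ω))) := by
        refine integral_congr_ae (Filter.Eventually.of_forall fun t => ?_)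
        simp only [hφoptdef]
        ring
      have hd1 : Integrable (fun t => 1 / Λ * ((φ t ω - φopt t ω) * N t ω)
          - 1 / Λ * ((φ t ω - φopt t ω) * S t ω)) (volume.restrict (Icc (0:ℝ) T)) :=
        (hiηN.const_mul _).sub (hiηS.const_mul _)
      have hd2 : Integrable (fun t => (-Φ₀ / T + 1 / (Λ * T) * M₀ ω) * (φ t ω - φopt t ω))
          (volume.restrict (Icc (0:ℝ) T)) := hiη1.const_mul _
      have hd3 : Integrable (fun t => 1 / Λ * ((φ t ω - φopt t ω) * N t ω))
          (volume.restrict (Icc (0:ℝ) T)) := hiηN.const_mul _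
      have hd4 : Integrable (fun t => 1 / Λ * ((φ t ω - φopt t ω) * S t ω))
          (volume.restrict (Icc (0:ℝ) T)) := hiηS.const_mul _
      rw [e3a, integral_add hd2 hd1, integral_sub hd3 hd4, integral_const_mul,
        integral_const_mul, integral_const_mul, hη0, mul_zero, zero_add]
    have e1 : (∫ t in Icc (0:ℝ) T, φ t ω * S t ω)
        = (∫ t in Icc (0:ℝ) T, φopt t ω * S t ω)
          + ∫ t in Icc (0:ℝ) T, (φ t ω - φopt t ω) * S t ω := by
      rw [← integral_add hiOptS hiηS]
      exact integral_congr_ae (Filter.Eventually.of_forall fun t => by ring)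
    have e2 : (∫ t in Icc (0:ℝ) T, (φ t ω) ^ 2)
        = (∫ t in Icc (0:ℝ) T, (φopt t ω) ^ 2)
          + ((∫ t in Icc (0:ℝ) T, (φ t ω - φopt t ω) ^ 2)
            + 2 * ∫ t in Icc (0:ℝ) T, (φ t ω - φopt t ω) * φopt t ω) := by
      have hd5 : Integrable (fun t => 2 * ((φ t ω - φopt t ω) * φopt t ω))
          (volume.restrict (Icc (0:ℝ) T)) := hiηOpt.const_mul _
      have hd6 : Integrable (fun t => (φ t ω - φopt t ω) ^ 2
          + 2 * ((φ t ω - φopt t ω) * φopt t ω)) (volume.restrict (Icc (0:ℝ) T)) :=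
        hiη2.add hd5
      rw [← integral_const_mul, ← integral_add hiη2 hd5, ← integral_add hiOpt2 hd6]
      exact integral_congr_ae (Filter.Eventually.of_forall fun t => by ring)
    have hkey : wealth T Λ Φ₀ S φ ω = wealth T Λ Φ₀ S φopt ω
        - (∫ t in Icc (0:ℝ) T, (φ t ω - φopt t ω) * N t ω)
        - (Λ / 2) * ∫ t in Icc (0:ℝ) T, (φ t ω - φopt t ω) ^ 2 := by
      have : wealth T Λ Φ₀ S φ ω = -Φ₀ * S 0 ω - (∫ t in Icc (0:ℝ) T, φ t ω * S t ω)
          - (Λ / 2) * ∫ t in Icc (0:ℝ) T, (φ t ω) ^ 2 := rfl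
      rw [this, e1, e2, e3]
      have : wealth T Λ Φ₀ S φopt ω = -Φ₀ * S 0 ω
          - (∫ t in Icc (0:ℝ) T, φopt t ω * S t ω)
          - (Λ / 2) * ∫ t in Icc (0:ℝ) T, (φopt t ω) ^ 2 := rfl
      rw [this]
      field_simp
      ring
    refine ⟨hkey, hiη2, hη0, ?_⟩
    -- the quantitative bound
    have habs : |∫ t in Icc (0:ℝ) T, (φ t ω - φopt t ω) * N t ω|
        ≤ Λ / 4 * (∫ t in Icc (0:ℝ) T, (φ t ω - φopt t ω) ^ 2)
          + 1 / Λ * ∫ t in Icc (0:ℝ) T, (N t ω) ^ 2 := by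
      have h1 : |∫ t in Icc (0:ℝ) T, (φ t ω - φopt t ω) * N t ω|
          ≤ ∫ t in Icc (0:ℝ) T, |(φ t ω - φopt t ω) * N t ω| := by
        have := norm_integral_le_integral_norm (μ := volume.restrict (Icc (0:ℝ) T))
            (fun t => (φ t ω - φopt t ω) * N t ω)
        simpa [Real.norm_eq_abs, abs_mul] using this
      have h2 : (∫ t in Icc (0:ℝ) T, |(φ t ω - φopt t ω) * N t ω|)
          ≤ ∫ t in Icc (0:ℝ) T,
            (Λ / 4 * (φ t ω - φopt t ω) ^ 2 + 1 / Λ * (N t ω) ^ 2) := by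
        refine integral_mono hiηN.abs ((hiη2.const_mul _).add (hiN2.const_mul _)) ?_
        intro t
        exact young_ineq hΛ _ _
      rw [integral_add (hiη2.const_mul _) (hiN2.const_mul _), integral_const_mul,
        integral_const_mul] at h2
      linarith
    have := neg_abs_le (∫ t in Icc (0:ℝ) T, (φ t ω - φopt t ω) * N t ω)
    rw [hkey]
    linarith
  -- integrability of the candidate's wealth
  have mkWealth : ∀ ψ : ℝ → Ω → ℝ,
      AEStronglyMeasurable (fun p : ℝ × Ω => ψ p.1 p.2)
        ((volume.restrict (Icc (0:ℝ) T)).prod μ) →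
      Integrable (fun p : ℝ × Ω => (ψ p.1 p.2) ^ 2)
        ((volume.restrict (Icc (0:ℝ) T)).prod μ) →
      Integrable (wealth T Λ Φ₀ S ψ) μ := by
    intro ψ hasm hsq
    have h1 : Integrable (fun p : ℝ × Ω => ψ p.1 p.2 * S p.1 p.2)
        ((volume.restrict (Icc (0:ℝ) T)).prod μ) := int_mul_of_sq hasm hSasm hsq hsqS
    have h2 : Integrable (fun ω => ∫ t in Icc (0:ℝ) T, ψ t ω * S t ω) μ :=
      h1.integral_prod_right
    have h3 : Integrable (fun ω => ∫ t in Icc (0:ℝ) T, (ψ t ω) ^ 2) μ :=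
      hsq.integral_prod_right
    have : wealth T Λ Φ₀ S ψ = fun ω => -Φ₀ * S 0 ω
        - (∫ t in Icc (0:ℝ) T, ψ t ω * S t ω) - (Λ / 2) * ∫ t in Icc (0:ℝ) T, (ψ t ω) ^ 2 :=
      rfl
    rw [this]
    exact ((hS0.const_mul (-Φ₀)).sub h2).sub (h3.const_mul (Λ / 2))
  have hWopt : Integrable (wealth T Λ Φ₀ S φopt) μ := mkWealth φopt hOptasm hsqOpt
  by_cases Hsq : Integrable (fun p : ℝ × Ω => (φ p.1 p.2 - φopt p.1 p.2) ^ 2)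
      ((volume.restrict (Icc (0:ℝ) T)).prod μ)
  · -- integrable case
    have hηasm : AEStronglyMeasurable (fun p : ℝ × Ω => φ p.1 p.2 - φopt p.1 p.2)
        ((volume.restrict (Icc (0:ℝ) T)).prod μ) := hφasm.sub hOptasm
    have hsqφ : Integrable (fun p : ℝ × Ω => (φ p.1 p.2) ^ 2)
        ((volume.restrict (Icc (0:ℝ) T)).prod μ) := by
      have := sq_int_add hηasm hOptasm Hsq hsqOpt
      refine this.congr (Filter.Eventually.of_forall fun p => by ring_nf)
    have hWφ : Integrable (wealth T Λ Φ₀ S φ) μ := mkWealth φ hφasm hsqφ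
    have hηN : Integrable (fun p : ℝ × Ω => (φ p.1 p.2 - φopt p.1 p.2) * N p.1 p.2)
        ((volume.restrict (Icc (0:ℝ) T)).prod μ) := int_mul_of_sq hηasm hNasm Hsq hsqN
    have hIηN : Integrable (fun ω => ∫ t in Icc (0:ℝ) T, (φ t ω - φopt t ω) * N t ω) μ :=
      hηN.integral_prod_right
    have hIη2 : Integrable (fun ω => ∫ t in Icc (0:ℝ) T, (φ t ω - φopt t ω) ^ 2) μ :=
      Hsq.integral_prod_right
    -- E[∫ η N dt] = 0
    have hNTasm : AEStronglyMeasurable (N T) μ :=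
      (((IsStronglyProgressive.stronglyAdapted hNprog) T).mono (ℱ.le T)).aestronglyMeasurable
    have hNTint : Integrable (N T) μ := int_of_sq hNTasm hNT2
    have key_t : ∀ᵐ t ∂(volume.restrict (Icc (0:ℝ) T)),
        (∫ ω, (φ t ω - φopt t ω) * N t ω ∂μ) = ∫ ω, (φ t ω - φopt t ω) * N T ω ∂μ := by
      filter_upwards [ae_restrict_mem measurableSet_Icc, Hsq.prod_right_ae,
        hsqN.prod_right_ae] with t ht hη2t hN2t
      have hηSM : StronglyMeasurable[ℱ t] (fun ω => φ t ω - φopt t ω) := by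
        have h1 : StronglyMeasurable[ℱ t] (φ t) := (IsStronglyProgressive.stronglyAdapted hφprog) t
        have h2 : StronglyMeasurable[ℱ t] (N t) := (IsStronglyProgressive.stronglyAdapted hNprog) t
        have h3 : StronglyMeasurable[ℱ t] (S t) := (IsStronglyProgressive.stronglyAdapted hprog) t
        have h4 : StronglyMeasurable[ℱ t] M₀ := by
          rw [hM₀]; exact stronglyMeasurable_condExp.mono (ℱ.mono ht.1)
        have h5 : StronglyMeasurable[ℱ t] (fun ω =>
            -Φ₀ / T + 1 / (Λ * T) * M₀ ω + 1 / Λ * N t ω - 1 / Λ * S t ω) :=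
          ((stronglyMeasurable_const.add (stronglyMeasurable_const.mul h4)).add
            (stronglyMeasurable_const.mul h2)).sub (stronglyMeasurable_const.mul h3)
        have heq : (fun ω => φ t ω - φopt t ω) = fun ω => φ t ω -
            (-Φ₀ / T + 1 / (Λ * T) * M₀ ω + 1 / Λ * N t ω - 1 / Λ * S t ω) := by
          funext ω; rw [hφoptdef]
        rw [heq]
        exact h1.sub h5
      have hηasmμ : AEStronglyMeasurable (fun ω => φ t ω - φopt t ω) μ :=
        (hηSM.mono (ℱ.le t)).aestronglyMeasurable
      have hNtasm : AEStronglyMeasurable (N t) μ :=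
        (((IsStronglyProgressive.stronglyAdapted hNprog) t).mono (ℱ.le t)).aestronglyMeasurable
      have hmul2 : Integrable (fun ω => (φ t ω - φopt t ω) * N T ω) μ :=
        int_mul_of_sq hηasmμ hNTasm hη2t hNT2
      have step1 : (∫ ω, (φ t ω - φopt t ω) * N t ω ∂μ)
          = ∫ ω, (φ t ω - φopt t ω) * (μ[N T|ℱ t]) ω ∂μ := by
        refine integral_congr_ae ?_
        filter_upwards [hNmart t ht] with ω hω
        rw [hω]
      have step2 : (∫ ω, (φ t ω - φopt t ω) * (μ[N T|ℱ t]) ω ∂μ)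
          = ∫ ω, (μ[(fun ω => φ t ω - φopt t ω) * (N T)|ℱ t]) ω ∂μ := by
        refine (integral_congr_ae ?_).symm
        filter_upwards [condExp_mul_of_stronglyMeasurable_left hηSM
          (by exact hmul2) hNTint] with ω hω
        rw [hω]
        simp [Pi.mul_apply]
      have step3 : (∫ ω, (μ[(fun ω => φ t ω - φopt t ω) * (N T)|ℱ t]) ω ∂μ)
          = ∫ ω, (φ t ω - φopt t ω) * N T ω ∂μ := by
        have := integral_condExp (ℱ.le t)
          (f := (fun ω => φ t ω - φopt t ω) * (N T)) (μ := μ)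
        rw [this]
        simp [Pi.mul_apply]
      rw [step1, step2, step3]
    have hηNT : Integrable (fun p : ℝ × Ω => (φ p.1 p.2 - φopt p.1 p.2) * N T p.2)
        ((volume.restrict (Icc (0:ℝ) T)).prod μ) := by
      refine int_mul_of_sq hηasm ?_ Hsq hsqNT
      exact hNTasm.comp_snd
    have EηN0 : (∫ ω, (∫ t in Icc (0:ℝ) T, (φ t ω - φopt t ω) * N t ω) ∂μ) = 0 := by
      have swap1 : (∫ ω, (∫ t in Icc (0:ℝ) T, (φ t ω - φopt t ω) * N t ω) ∂μ)
          = ∫ t in Icc (0:ℝ) T, (∫ ω, (φ t ω - φopt t ω) * N t ω ∂μ) := by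
        exact (integral_integral_swap hηN).symm
      have swap2 : (∫ t in Icc (0:ℝ) T, (∫ ω, (φ t ω - φopt t ω) * N T ω ∂μ))
          = ∫ ω, (∫ t in Icc (0:ℝ) T, (φ t ω - φopt t ω) * N T ω) ∂μ := by
        exact integral_integral_swap hηNT
      rw [swap1, integral_congr_ae key_t, swap2]
      have : ∀ᵐ ω ∂μ, (∫ t in Icc (0:ℝ) T, (φ t ω - φopt t ω) * N T ω) = 0 := by
        filter_upwards [main] with ω hω
        rw [integral_mul_const, hω.2.2.1, zero_mul]
      rw [integral_congr_ae this, integral_zero]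
    -- conclude
    rw [expEReal_of_integrable' hWφ, expEReal_of_integrable' hWopt, EReal.coe_le_coe_iff]
    have hstep : (∫ ω, wealth T Λ Φ₀ S φ ω ∂μ)
        = (∫ ω, wealth T Λ Φ₀ S φopt ω ∂μ)
          - (∫ ω, (∫ t in Icc (0:ℝ) T, (φ t ω - φopt t ω) * N t ω) ∂μ)
          - (Λ / 2) * ∫ ω, (∫ t in Icc (0:ℝ) T, (φ t ω - φopt t ω) ^ 2) ∂μ := by
      have heq : (∫ ω, wealth T Λ Φ₀ S φ ω ∂μ)
          = ∫ ω, (wealth T Λ Φ₀ S φopt ω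
            - (∫ t in Icc (0:ℝ) T, (φ t ω - φopt t ω) * N t ω)
            - (Λ / 2) * ∫ t in Icc (0:ℝ) T, (φ t ω - φopt t ω) ^ 2) ∂μ := by
        refine integral_congr_ae ?_
        filter_upwards [main] with ω hω
        exact hω.1
      have hA : Integrable (fun ω => wealth T Λ Φ₀ S φopt ω
          - ∫ t in Icc (0:ℝ) T, (φ t ω - φopt t ω) * N t ω) μ := hWopt.sub hIηN
      have hB : Integrable (fun ω => (Λ / 2) * ∫ t in Icc (0:ℝ) T, (φ t ω - φopt t ω) ^ 2) μ :=
        hIη2.const_mul _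
      rw [heq, integral_sub hA hB, integral_sub hWopt hIηN, integral_const_mul]
    rw [hstep, EηN0]
    have hnn : 0 ≤ ∫ ω, (∫ t in Icc (0:ℝ) T, (φ t ω - φopt t ω) ^ 2) ∂μ :=
      integral_nonneg fun ω => integral_nonneg fun t => sq_nonneg _
    nlinarith [mul_nonneg (le_of_lt (by linarith : (0:ℝ) < Λ / 2)) hnn]
  · -- non-integrable case: E[wealth φ] = ⊥
    have hηasm : AEStronglyMeasurable (fun p : ℝ × Ω => φ p.1 p.2 - φopt p.1 p.2)
        ((volume.restrict (Icc (0:ℝ) T)).prod μ) := hφasm.sub hOptasm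
    have hsqasm : AEStronglyMeasurable (fun p : ℝ × Ω => (φ p.1 p.2 - φopt p.1 p.2) ^ 2)
        ((volume.restrict (Icc (0:ℝ) T)).prod μ) :=
      (hηasm.mul hηasm).congr (Filter.Eventually.of_forall fun p => (pow_two _).symm)
    have htop : (∫⁻ ω, (∫⁻ t in Icc (0:ℝ) T,
        ENNReal.ofReal ((φ t ω - φopt t ω) ^ 2)) ∂μ) = ⊤ := by
      by_contra h
      refine Hsq ⟨hsqasm, ?_⟩
      rw [hasFiniteIntegral_iff_ofReal (Filter.Eventually.of_forall fun p => sq_nonneg _)]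
      have hmeas : AEMeasurable
          (fun p : ℝ × Ω => ENNReal.ofReal ((φ p.1 p.2 - φopt p.1 p.2) ^ 2))
          ((volume.restrict (Icc (0:ℝ) T)).prod μ) :=
        ENNReal.measurable_ofReal.comp_aemeasurable hsqasm.aemeasurable
      rw [lintegral_prod_symm _ hmeas]
      exact lt_top_iff_ne_top.2 h
    have htop2 : (∫⁻ ω, ENNReal.ofReal
        (∫ t in Icc (0:ℝ) T, (φ t ω - φopt t ω) ^ 2) ∂μ) = ⊤ := by
      rw [← htop]
      refine lintegral_congr_ae ?_
      filter_upwards [main] with ω hω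
      exact ofReal_integral_eq_lintegral_ofReal hω.2.1
        (Filter.Eventually.of_forall fun t => sq_nonneg _)
    have hG : Integrable (fun ω => wealth T Λ Φ₀ S φopt ω
        + (1 / Λ) * ∫ t in Icc (0:ℝ) T, (N t ω) ^ 2) μ :=
      hWopt.add (hsqN.integral_prod_right.const_mul _)
    have hGfin : (∫⁻ ω, ENNReal.ofReal (wealth T Λ Φ₀ S φopt ω
        + (1 / Λ) * ∫ t in Icc (0:ℝ) T, (N t ω) ^ 2) ∂μ) ≠ ⊤ :=
      (lintegral_ofReal_lt_top_of_integrable' hG).ne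
    -- ∫⁻ ofReal ((Λ/4) * Iη - G) = ⊤
    have hdiff_top : (∫⁻ ω, ENNReal.ofReal
        ((Λ / 4) * (∫ t in Icc (0:ℝ) T, (φ t ω - φopt t ω) ^ 2)
          - (wealth T Λ Φ₀ S φopt ω
            + (1 / Λ) * ∫ t in Icc (0:ℝ) T, (N t ω) ^ 2)) ∂μ) = ⊤ := by
      by_contra h
      have hle : ∀ ω, ENNReal.ofReal ((Λ / 4) * ∫ t in Icc (0:ℝ) T, (φ t ω - φopt t ω) ^ 2)
          ≤ ENNReal.ofReal ((Λ / 4) * (∫ t in Icc (0:ℝ) T, (φ t ω - φopt t ω) ^ 2)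
              - (wealth T Λ Φ₀ S φopt ω + (1 / Λ) * ∫ t in Icc (0:ℝ) T, (N t ω) ^ 2))
            + ENNReal.ofReal (wealth T Λ Φ₀ S φopt ω
              + (1 / Λ) * ∫ t in Icc (0:ℝ) T, (N t ω) ^ 2) := by
        intro ω
        calc ENNReal.ofReal ((Λ / 4) * ∫ t in Icc (0:ℝ) T, (φ t ω - φopt t ω) ^ 2)
            = ENNReal.ofReal (((Λ / 4) * (∫ t in Icc (0:ℝ) T, (φ t ω - φopt t ω) ^ 2)
              - (wealth T Λ Φ₀ S φopt ω + (1 / Λ) * ∫ t in Icc (0:ℝ) T, (N t ω) ^ 2))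
              + (wealth T Λ Φ₀ S φopt ω
                + (1 / Λ) * ∫ t in Icc (0:ℝ) T, (N t ω) ^ 2)) := by
              congr 1
              ring
          _ ≤ _ := ENNReal.ofReal_add_le
      have hGmeas : AEMeasurable (fun ω => ENNReal.ofReal (wealth T Λ Φ₀ S φopt ω
          + (1 / Λ) * ∫ t in Icc (0:ℝ) T, (N t ω) ^ 2)) μ :=
        ENNReal.measurable_ofReal.comp_aemeasurable hG.aestronglyMeasurable.aemeasurable
      have h1 : (∫⁻ ω, ENNReal.ofReal
          ((Λ / 4) * ∫ t in Icc (0:ℝ) T, (φ t ω - φopt t ω) ^ 2) ∂μ) = ⊤ := by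
        have heq : ∀ ω, ENNReal.ofReal
            ((Λ / 4) * ∫ t in Icc (0:ℝ) T, (φ t ω - φopt t ω) ^ 2)
            = ENNReal.ofReal (Λ / 4) * ENNReal.ofReal
              (∫ t in Icc (0:ℝ) T, (φ t ω - φopt t ω) ^ 2) := fun ω =>
          ENNReal.ofReal_mul (by positivity)
        rw [lintegral_congr heq, lintegral_const_mul' _ _ ENNReal.ofReal_ne_top, htop2,
          ENNReal.mul_top]
        simp only [ne_eq, ENNReal.ofReal_eq_zero, not_le]
        positivity
      have h2 : (∫⁻ ω, (ENNReal.ofReal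
          ((Λ / 4) * (∫ t in Icc (0:ℝ) T, (φ t ω - φopt t ω) ^ 2)
            - (wealth T Λ Φ₀ S φopt ω + (1 / Λ) * ∫ t in Icc (0:ℝ) T, (N t ω) ^ 2))
          + ENNReal.ofReal (wealth T Λ Φ₀ S φopt ω
            + (1 / Λ) * ∫ t in Icc (0:ℝ) T, (N t ω) ^ 2)) ∂μ) < ⊤ := by
        rw [lintegral_add_right' _ hGmeas]
        exact ENNReal.add_lt_top.2 ⟨lt_top_iff_ne_top.2 h, lt_top_iff_ne_top.2 hGfin⟩
      exact absurd (h1 ▸ lintegral_mono hle) (by simpa using h2.ne)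
    have hneg_top : (∫⁻ ω, ENNReal.ofReal (-(wealth T Λ Φ₀ S φ ω)) ∂μ) = ⊤ := by
      rw [← top_le_iff, ← hdiff_top]
      refine lintegral_mono_ae ?_
      filter_upwards [main] with ω hω
      refine ENNReal.ofReal_le_ofReal ?_
      have := hω.2.2.2
      linarith
    rw [expEReal_eq_bot' hneg_top]
    exact bot_le
end

section
/- Assume E[∫_0^T S_t² dt] < ∞ and E[|S_0|] < ∞. Suppose the supremum v of E[V^{Φ_0,φ}_T] over all φ ∈ A_{Φ_0} with E[∫_0^T φ_t² dt] < ∞ is finite, and suppose φ¹, φ² ∈ A_{Φ_0} with E[∫_0^T (φ¹_t)² dt] < ∞ and E[∫_0^T (φ²_t)² dt] < ∞ both attain v. Then φ¹ = φ² dt⊗P-almost everywhere on [0,T]×Ω. -/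
open MeasureTheory Set
open scoped ENNReal

/-! Tonelli identifies finite energy with membership in `L²(dt ⊗ P)`, and Fubini writes the
expected wealth as `-Φ₀ E[S₀] - ∫∫ (φ S + (Λ/2) φ²) d(dt ⊗ P)`, a strictly concave quadratic
functional of `φ`. The admissible set is convex, and the parallelogram identity gives, for the
midpoint `ψ = (φ₁ + φ₂)/2`, `E[V(ψ)] = (E[V(φ₁)] + E[V(φ₂)])/2 + (Λ/8) ∫∫ (φ₁ - φ₂)²`.
As `E[V(ψ)] ≤ v`, the last integral vanishes. -/

open Function

lemma MeasureTheory.IsStronglyProgressive.aestronglyMeasurable_uncurry {Ω β : Type*}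
    {m0 : MeasurableSpace Ω} [TopologicalSpace β] {ℱ : Filtration ℝ m0} {f : ℝ → Ω → β} (hf : IsStronglyProgressive ℱ f)
    {ν : Measure ℝ} [SFinite ν] {μ : Measure Ω} {T : ℝ} (hν : ∀ᵐ t ∂ν, t ≤ T) :
    AEStronglyMeasurable (uncurry f) (ν.prod μ) := by
  have hfT : StronglyMeasurable (fun q : Iic T × Ω => f q.1 q.2) :=
    (hf T).mono (sup_le_sup le_rfl (MeasurableSpace.comap_mono (ℱ.le T)))
  have hclip : Measurable fun p : ℝ × Ω => ((⟨min p.1 T, min_le_right p.1 T⟩ : Iic T), p.2) :=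
    (measurable_fst.min measurable_const).subtype_mk.prodMk measurable_snd
  -- `f` agrees with the measurable `(t, ω) ↦ f (min t T) ω` wherever `t ≤ T`
  refine ⟨_, hfT.comp_measurable hclip, ?_⟩
  filter_upwards [Measure.quasiMeasurePreserving_fst.ae hν] with p hp
  simp [uncurry, min_eq_left hp]

lemma lintegral_lintegral_ofReal_sq_lt_top_iff_memLp {α β : Type*} {mα : MeasurableSpace α}
    {mβ : MeasurableSpace β} {ν : Measure α} {μ : Measure β} [SFinite ν] [SFinite μ]
    {F : α × β → ℝ} (hF : AEStronglyMeasurable F (ν.prod μ)) :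
    ∫⁻ y, ∫⁻ x, ENNReal.ofReal (F (x, y) ^ 2) ∂ν ∂μ < ⊤ ↔ MemLp F 2 (ν.prod μ) := by
  rw [memLp_two_iff_integrable_sq hF,
    ← lintegral_prod_symm _ (hF.aemeasurable.pow_const 2).ennreal_ofReal,
    ← hasFiniteIntegral_iff_ofReal (ae_of_all _ fun _ => sq_nonneg _)]
  exact ⟨fun h => ⟨hF.pow 2, h⟩, fun h => h.2⟩

lemma integrable_mul_add_const_mul_sq {α : Type*} {m : MeasurableSpace α} {ρ : Measure α}
    {f s : α → ℝ} (hf : MemLp f 2 ρ) (hs : MemLp s 2 ρ) (c : ℝ) :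
    Integrable (fun p => f p * s p + c * f p ^ 2) ρ :=
  (hf.integrable_mul hs).add (hf.integrable_sq.const_mul c)

lemma integral_midpoint_mul_add_sq {α : Type*} {m : MeasurableSpace α} {ρ : Measure α}
    {f g s : α → ℝ} (hf : MemLp f 2 ρ) (hg : MemLp g 2 ρ) (hs : MemLp s 2 ρ) (c : ℝ) :
    ∫ p, (2⁻¹ * (f p + g p) * s p + c * (2⁻¹ * (f p + g p)) ^ 2) ∂ρ
      = 2⁻¹ * ∫ p, (f p * s p + c * f p ^ 2) ∂ρ + 2⁻¹ * ∫ p, (g p * s p + c * g p ^ 2) ∂ρ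
        - c / 4 * ∫ p, (f p - g p) ^ 2 ∂ρ := by
  have hF := (integrable_mul_add_const_mul_sq hf hs c).const_mul 2⁻¹
  have hG := (integrable_mul_add_const_mul_sq hg hs c).const_mul 2⁻¹
  have hD : Integrable (fun p => c / 4 * (f p - g p) ^ 2) ρ :=
    (hf.sub hg).integrable_sq.const_mul _
  calc _ = ∫ p, (2⁻¹ * (f p * s p + c * f p ^ 2) + 2⁻¹ * (g p * s p + c * g p ^ 2)
          - c / 4 * (f p - g p) ^ 2) ∂ρ := by
        congr 1 with p
        ring
    _ = _ := by
        rw [integral_sub (hF.fun_add hG) hD, integral_add hF hG, integral_const_mul,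
          integral_const_mul, integral_const_mul]

lemma integral_wealth_eq {Ω : Type*} {m0 : MeasurableSpace Ω} {μ : Measure Ω} [SFinite μ]
    {T Λ Φ₀ : ℝ} {S φ : ℝ → Ω → ℝ} (hS0 : Integrable (S 0) μ)
    (hS : MemLp (uncurry S) 2 ((volume.restrict (Icc 0 T)).prod μ))
    (hφ : MemLp (uncurry φ) 2 ((volume.restrict (Icc 0 T)).prod μ)) :
    ∫ ω, wealth T Λ Φ₀ S φ ω ∂μ = -Φ₀ * ∫ ω, S 0 ω ∂μ
      - ∫ p, (uncurry φ p * uncurry S p + Λ / 2 * uncurry φ p ^ 2)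
          ∂(volume.restrict (Icc 0 T)).prod μ := by
  have hφS : Integrable (fun p => uncurry φ p * uncurry S p)
      ((volume.restrict (Icc 0 T)).prod μ) := hφ.integrable_mul hS
  have hφ2 := hφ.integrable_sq
  have hS0' := hS0.const_mul (-Φ₀)
  have hIφS : Integrable (fun ω => ∫ t in Icc 0 T, φ t ω * S t ω) μ := hφS.integral_prod_right
  have hIφ2 : Integrable (fun ω => ∫ t in Icc 0 T, φ t ω ^ 2) μ := hφ2.integral_prod_right
  rw [integral_add hφS (hφ2.const_mul _), integral_const_mul, integral_prod_symm _ hφS,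
    integral_prod_symm _ hφ2]
  unfold wealth
  rw [integral_sub (hS0'.sub' hIφS) (hIφ2.const_mul _), integral_sub hS0' hIφS,
    integral_const_mul, integral_const_mul, sub_sub]
  rfl

lemma isAdmissible_midpoint {Ω : Type*} {m0 : MeasurableSpace Ω} {μ : Measure Ω}
    [IsFiniteMeasure μ] {T Φ₀ : ℝ} {ℱ : Filtration ℝ m0} {φ₁ φ₂ : ℝ → Ω → ℝ}
    (hφ₁ : isAdmissible T Φ₀ ℱ μ φ₁) (hφ₂ : isAdmissible T Φ₀ ℱ μ φ₂)
    (h₁ : MemLp (uncurry φ₁) 2 ((volume.restrict (Icc 0 T)).prod μ))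
    (h₂ : MemLp (uncurry φ₂) 2 ((volume.restrict (Icc 0 T)).prod μ)) :
    isAdmissible T Φ₀ ℱ μ fun t ω => 2⁻¹ * (φ₁ t ω + φ₂ t ω) := by
  refine ⟨(isStronglyProgressive_const ℱ 2⁻¹).mul (IsStronglyProgressive.add hφ₁.1 hφ₂.1), ?_, ?_⟩
  · exact ((h₁.add h₂).const_mul 2⁻¹).integrable_sq.prod_left_ae
  · filter_upwards [hφ₁.2.2, hφ₂.2.2, (h₁.integrable one_le_two).prod_left_ae,
      (h₂.integrable one_le_two).prod_left_ae] with ω hc₁ hc₂ hi₁ hi₂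
    simp only [uncurry_apply_pair] at hi₁ hi₂
    rw [integral_const_mul, integral_add hi₁ hi₂]
    linarith

theorem stmt_9_general
    {Ω : Type*} {m0 : MeasurableSpace Ω} {μ : Measure Ω} [IsProbabilityMeasure μ]
    (T : ℝ) (Λ : ℝ) (hΛ : 0 < Λ) (Φ₀ : ℝ)
    (ℱ : Filtration ℝ m0)
    (S : ℝ → Ω → ℝ)
    (hprog : ProgMeasurable ℱ S)
    (hS2 : ∫⁻ ω, (∫⁻ t in Icc (0:ℝ) T, ENNReal.ofReal ((S t ω) ^ 2)) ∂μ < ⊤)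
    (hS0 : Integrable (S 0) μ)
    (v : ℝ)
    -- `v` is an upper bound for the expected terminal wealth over all admissible
    -- strategies with finite energy:
    (hub : ∀ φ : ℝ → Ω → ℝ, isAdmissible T Φ₀ ℱ μ φ →
      (∫⁻ ω, (∫⁻ t in Icc (0:ℝ) T, ENNReal.ofReal ((φ t ω) ^ 2)) ∂μ < ⊤) →
      ∫ ω, wealth T Λ Φ₀ S φ ω ∂μ ≤ v)
    -- `φ¹` and `φ²` are admissible with finite energy and both attain `v`:
    (φ₁ φ₂ : ℝ → Ω → ℝ)
    (hφ₁ : isAdmissible T Φ₀ ℱ μ φ₁)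
    (hφ₂ : isAdmissible T Φ₀ ℱ μ φ₂)
    (hφ₁2 : ∫⁻ ω, (∫⁻ t in Icc (0:ℝ) T, ENNReal.ofReal ((φ₁ t ω) ^ 2)) ∂μ < ⊤)
    (hφ₂2 : ∫⁻ ω, (∫⁻ t in Icc (0:ℝ) T, ENNReal.ofReal ((φ₂ t ω) ^ 2)) ∂μ < ⊤)
    (hopt₁ : ∫ ω, wealth T Λ Φ₀ S φ₁ ω ∂μ = v)
    (hopt₂ : ∫ ω, wealth T Λ Φ₀ S φ₂ ω ∂μ = v) :
    (fun p : ℝ × Ω => φ₁ p.1 p.2)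
      =ᵐ[(volume.restrict (Icc (0:ℝ) T)).prod μ] fun p : ℝ × Ω => φ₂ p.1 p.2 := by
  have hIcc : ∀ᵐ t ∂volume.restrict (Icc (0:ℝ) T), t ≤ T :=
    ae_restrict_of_forall_mem measurableSet_Icc fun _ ht => ht.2
  have hS := (lintegral_lintegral_ofReal_sq_lt_top_iff_memLp
    (IsStronglyProgressive.aestronglyMeasurable_uncurry hprog hIcc)).1 hS2
  have h₁ := (lintegral_lintegral_ofReal_sq_lt_top_iff_memLp
    (IsStronglyProgressive.aestronglyMeasurable_uncurry hφ₁.1 hIcc)).1 hφ₁2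
  have h₂ := (lintegral_lintegral_ofReal_sq_lt_top_iff_memLp
    (IsStronglyProgressive.aestronglyMeasurable_uncurry hφ₂.1 hIcc)).1 hφ₂2
  set ψ : ℝ → Ω → ℝ := fun t ω => 2⁻¹ * (φ₁ t ω + φ₂ t ω)
  have hψ : MemLp (uncurry ψ) 2 ((volume.restrict (Icc (0:ℝ) T)).prod μ) :=
    (h₁.add h₂).const_mul 2⁻¹
  have hmid : ∫ p, (uncurry ψ p * uncurry S p + Λ / 2 * uncurry ψ p ^ 2)
      ∂(volume.restrict (Icc (0:ℝ) T)).prod μ = _ := integral_midpoint_mul_add_sq h₁ h₂ hS _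
  have hgap : v + Λ / 8 * ∫ p, (uncurry φ₁ p - uncurry φ₂ p) ^ 2
      ∂(volume.restrict (Icc (0:ℝ) T)).prod μ ≤ v :=
    calc _ = ∫ ω, wealth T Λ Φ₀ S ψ ω ∂μ := by
          rw [integral_wealth_eq hS0 hS h₁] at hopt₁
          rw [integral_wealth_eq hS0 hS h₂] at hopt₂
          rw [integral_wealth_eq hS0 hS hψ, hmid]
          linarith
      _ ≤ v := hub ψ (isAdmissible_midpoint hφ₁ hφ₂ h₁ h₂)
          ((lintegral_lintegral_ofReal_sq_lt_top_iff_memLp hψ.1).2 hψ)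
  have hD : ∫ p, (uncurry φ₁ p - uncurry φ₂ p) ^ 2 ∂(volume.restrict (Icc (0:ℝ) T)).prod μ = 0 :=
    le_antisymm (by nlinarith) (integral_nonneg fun _ => sq_nonneg _)
  filter_upwards [(integral_eq_zero_iff_of_nonneg (fun _ => sq_nonneg _)
    (h₁.sub h₂).integrable_sq).1 hD] with p hp
  exact sub_eq_zero.1 (pow_eq_zero_iff two_ne_zero |>.1 hp)

/-- Assume `E[∫_0^T S_t² dt] < ∞` and `E[|S_0|] < ∞`.  Suppose the
supremum `v` of `E[V^{Φ₀,φ}_T]` over all `φ ∈ 𝒜_{Φ₀}` with `E[∫_0^T φ_t² dt] < ∞` is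
finite, and suppose `φ¹, φ² ∈ 𝒜_{Φ₀}` with finite energy both attain `v`.  Then
`φ¹ = φ²` holds `dt ⊗ P`-almost everywhere on `[0,T] × Ω`. -/
theorem stmt_9
    {Ω : Type*} {m0 : MeasurableSpace Ω} {μ : Measure Ω} [IsProbabilityMeasure μ]
    (T : ℝ) (hT : 0 < T) (Λ : ℝ) (hΛ : 0 < Λ) (Φ₀ : ℝ)
    (ℱ : Filtration ℝ m0)
    (S : ℝ → Ω → ℝ)
    (hprog : ProgMeasurable ℱ S)
    (hS2 : ∫⁻ ω, (∫⁻ t in Icc (0:ℝ) T, ENNReal.ofReal ((S t ω) ^ 2)) ∂μ < ⊤)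
    (hS0 : Integrable (S 0) μ)
    (v : ℝ)
    -- `v` is an upper bound for the expected terminal wealth over all admissible
    -- strategies with finite energy:
    (hub : ∀ φ : ℝ → Ω → ℝ, isAdmissible T Φ₀ ℱ μ φ →
      (∫⁻ ω, (∫⁻ t in Icc (0:ℝ) T, ENNReal.ofReal ((φ t ω) ^ 2)) ∂μ < ⊤) →
      ∫ ω, wealth T Λ Φ₀ S φ ω ∂μ ≤ v)
    -- `φ¹` and `φ²` are admissible with finite energy and both attain `v`:
    (φ₁ φ₂ : ℝ → Ω → ℝ)
    (hφ₁ : isAdmissible T Φ₀ ℱ μ φ₁)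
    (hφ₂ : isAdmissible T Φ₀ ℱ μ φ₂)
    (hφ₁2 : ∫⁻ ω, (∫⁻ t in Icc (0:ℝ) T, ENNReal.ofReal ((φ₁ t ω) ^ 2)) ∂μ < ⊤)
    (hφ₂2 : ∫⁻ ω, (∫⁻ t in Icc (0:ℝ) T, ENNReal.ofReal ((φ₂ t ω) ^ 2)) ∂μ < ⊤)
    (hopt₁ : ∫ ω, wealth T Λ Φ₀ S φ₁ ω ∂μ = v)
    (hopt₂ : ∫ ω, wealth T Λ Φ₀ S φ₂ ω ∂μ = v) :
    (fun p : ℝ × Ω => φ₁ p.1 p.2)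
      =ᵐ[(volume.restrict (Icc (0:ℝ) T)).prod μ] fun p : ℝ × Ω => φ₂ p.1 p.2 :=
  stmt_9_general T Λ hΛ Φ₀ ℱ S hprog hS2 hS0 v hub φ₁ φ₂ hφ₁ hφ₂ hφ₁2 hφ₂2 hopt₁ hopt₂
end

section
/- Let S be a square-integrable martingale on [0,T] with E[∫_0^T S_t² dt] < ∞. Then (i) for every φ ∈ A_{Φ_0} with E[∫_0^T φ_t² dt] < ∞, E[V^{Φ_0,φ}_T] ≤ −Φ_0²Λ/(2T); and (ii) the constant (deterministic) strategy φ_t ≡ −Φ_0/T belongs to A_{Φ_0} and satisfies E[V^{Φ_0,φ}_T] = −Φ_0²Λ/(2T), so constant-rate liquidation is optimal when the price is a martingale. -/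
/-!
Because `φ_t` is `ℱ_t`-measurable and `S` is a martingale, `E[φ_t S_t] = E[φ_t S_T]`; by Fubini
and `∫_0^T φ_t dt = -Φ₀` the trading term `E[∫_0^T φ_t S_t dt]` equals `-Φ₀ E[S_T] = -Φ₀ E[S_0]`
and cancels the initial position. Hence `E[V_T] = -(Λ/2) E[∫_0^T φ_t² dt]`, and Cauchy–Schwarz
gives `∫_0^T φ_t² dt ≥ Φ₀²/T` on every path, with equality for the constant rate `-Φ₀/T`.
-/

open MeasureTheory Set
open scoped ENNReal

namespace MeasureTheory

section Integrability

variable {α β : Type*} {mα : MeasurableSpace α} {mβ : MeasurableSpace β}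
  {μ : Measure α} {ν : Measure β}

theorem integrable_prod_of_lintegral_lintegral_lt_top [SFinite ν] {f : α × β → ℝ}
    (hf : AEStronglyMeasurable f (μ.prod ν)) (h0 : 0 ≤ f)
    (hfin : ∫⁻ x, ∫⁻ y, ENNReal.ofReal (f (x, y)) ∂ν ∂μ < ⊤) :
    Integrable f (μ.prod ν) := by
  refine ⟨hf, ?_⟩
  rw [HasFiniteIntegral, lintegral_congr fun p => Real.enorm_eq_ofReal (h0 p),
    lintegral_prod _ hf.aemeasurable.ennreal_ofReal]
  exact hfin

theorem sq_integral_le_measureReal_mul_integral_sq [IsFiniteMeasure μ] {f : α → ℝ}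
    (hf : MemLp f 2 μ) :
    (∫ x, f x ∂μ) ^ 2 ≤ μ.real univ * ∫ x, f x ^ 2 ∂μ := by
  set m := μ.real univ
  set I := ∫ x, f x ∂μ
  have hf1 : Integrable f μ := hf.integrable one_le_two
  have hexpand : ∫ x, (m * f x - I) ^ 2 ∂μ = m * (m * ∫ x, f x ^ 2 ∂μ - I ^ 2) := by
    have hpoint : ∀ x, (m * f x - I) ^ 2 = m ^ 2 * f x ^ 2 - 2 * m * I * f x + I ^ 2 :=
      fun x => by ring
    simp_rw [hpoint]
    rw [integral_add (f := fun x => m ^ 2 * f x ^ 2 - 2 * m * I * f x)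
        ((hf.integrable_sq.const_mul _).sub (hf1.const_mul _)) (integrable_const _),
      integral_sub (hf.integrable_sq.const_mul _) (hf1.const_mul _),
      integral_const_mul, integral_const_mul, integral_const, smul_eq_mul]
    ring
  have hnonneg : 0 ≤ m * (m * ∫ x, f x ^ 2 ∂μ - I ^ 2) :=
    hexpand ▸ integral_nonneg fun x => sq_nonneg _
  rcases (measureReal_nonneg : 0 ≤ m).eq_or_lt with hm | hm
  · have hμ : μ = 0 := Measure.measure_univ_eq_zero.mp ((measureReal_eq_zero_iff).mp hm.symm)
    simp [I, m, hμ]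
  · nlinarith [(mul_nonneg_iff_of_pos_left hm).mp hnonneg]

end Integrability

theorem integral_mul_condExp_of_stronglyMeasurable_left {Ω : Type*} {m m0 : MeasurableSpace Ω}
    {μ : Measure Ω} [IsFiniteMeasure μ] (hm : m ≤ m0) {f g : Ω → ℝ}
    (hf : StronglyMeasurable[m] f) (hfg : Integrable (f * g) μ) (hg : Integrable g μ) :
    ∫ ω, f ω * (μ[g | m]) ω ∂μ = ∫ ω, f ω * g ω ∂μ := by
  calc ∫ ω, f ω * (μ[g | m]) ω ∂μ = ∫ ω, (μ[f * g | m]) ω ∂μ :=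
        integral_congr_ae (condExp_mul_of_stronglyMeasurable_left hf hfg hg).symm
    _ = ∫ ω, f ω * g ω ∂μ := integral_condExp hm

theorem integral_integral_mul_eq_integral_mul_of_condExp {Ω ι : Type*} {m0 : MeasurableSpace Ω}
    {μ : Measure Ω} [IsFiniteMeasure μ] [Preorder ι] [MeasurableSpace ι] {ν : Measure ι}
    [SFinite ν] {ℱ : Filtration ι m0} {φ S : ι → Ω → ℝ} {τ : ι}
    (hφ : StronglyAdapted ℱ φ) (hSτ : Integrable (S τ) μ)
    (hmart : ∀ᵐ t ∂ν, μ[S τ | ℱ t] =ᵐ[μ] S t)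
    (hφS : Integrable (fun p : Ω × ι => φ p.2 p.1 * S p.2 p.1) (μ.prod ν))
    (hφSτ : Integrable (fun p : Ω × ι => φ p.2 p.1 * S τ p.1) (μ.prod ν)) :
    ∫ ω, ∫ t, φ t ω * S t ω ∂ν ∂μ = ∫ ω, (∫ t, φ t ω ∂ν) * S τ ω ∂μ := by
  have hsections : ∀ᵐ t ∂ν, ∫ ω, φ t ω * S t ω ∂μ = ∫ ω, φ t ω * S τ ω ∂μ := by
    filter_upwards [hmart, hφSτ.prod_left_ae] with t ht hφSτt
    rw [← integral_mul_condExp_of_stronglyMeasurable_left (ℱ.le t) (hφ t) hφSτt hSτ]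
    exact integral_congr_ae (ht.mono fun ω hω => by simp only [hω])
  calc ∫ ω, ∫ t, φ t ω * S t ω ∂ν ∂μ = ∫ t, ∫ ω, φ t ω * S t ω ∂μ ∂ν :=
        integral_integral_swap hφS
    _ = ∫ t, ∫ ω, φ t ω * S τ ω ∂μ ∂ν := integral_congr_ae hsections
    _ = ∫ ω, ∫ t, φ t ω * S τ ω ∂ν ∂μ := (integral_integral_swap hφSτ).symm
    _ = ∫ ω, (∫ t, φ t ω ∂ν) * S τ ω ∂μ := by simp_rw [integral_mul_const]

namespace IsStronglyProgressive

variable {Ω : Type*} {m0 : MeasurableSpace Ω} {ℱ : Filtration ℝ m0} {φ : ℝ → Ω → ℝ}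

theorem aestronglyMeasurable_uncurry_s10 (h : IsStronglyProgressive ℱ φ) (μ : Measure Ω)
    {ν : Measure ℝ} {T : ℝ} (hν : ∀ᵐ t ∂ν, t ≤ T) :
    AEStronglyMeasurable (fun p : Ω × ℝ => φ p.2 p.1) (μ.prod ν) := by
  have hIic : StronglyMeasurable fun q : Iic T × Ω => φ q.1 q.2 :=
    (h T).mono (sup_le_sup le_rfl (MeasurableSpace.comap_mono (ℱ.le T)))
  have hclip : Measurable fun p : Ω × ℝ =>
      ((⟨min p.2 T, mem_Iic.2 (min_le_right _ _)⟩ : Iic T), p.1) :=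
    ((measurable_snd.min measurable_const).subtype_mk).prodMk measurable_fst
  refine ⟨_, hIic.comp_measurable hclip, ?_⟩
  filter_upwards [Measure.quasiMeasurePreserving_snd.ae hν] with p hp
  simp [min_eq_left hp]

theorem memLp_two_uncurry (h : IsStronglyProgressive ℱ φ) {μ : Measure Ω} {ν : Measure ℝ}
    [SFinite ν] {T : ℝ} (hν : ∀ᵐ t ∂ν, t ≤ T)
    (hφ2 : ∫⁻ ω, ∫⁻ t, ENNReal.ofReal (φ t ω ^ 2) ∂ν ∂μ < ⊤) :
    MemLp (fun p : Ω × ℝ => φ p.2 p.1) 2 (μ.prod ν) := by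
  have hm := h.aestronglyMeasurable_uncurry_s10 μ hν
  exact (memLp_two_iff_integrable_sq hm).2 <|
    integrable_prod_of_lintegral_lintegral_lt_top (hm.pow 2) (fun _ => sq_nonneg _) hφ2

end IsStronglyProgressive

end MeasureTheory

open MeasureTheory

section Liquidation

variable {Ω : Type*} {m0 : MeasurableSpace Ω} {μ : Measure Ω} {ℱ : Filtration ℝ m0}
  {T Φ₀ : ℝ} {φ : ℝ → Ω → ℝ}

theorem ae_restrict_Icc_le_right {a b : ℝ} : ∀ᵐ t ∂(volume.restrict (Icc a b)), t ≤ b :=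
  ae_restrict_of_forall_mem measurableSet_Icc fun _ ht => ht.2

theorem sq_div_le_integral_setIntegral_sq [IsProbabilityMeasure μ] (hT : 0 < T)
    (hφ : isAdmissible T Φ₀ ℱ μ φ)
    (hφ2 : ∫⁻ ω, (∫⁻ t in Icc (0:ℝ) T, ENNReal.ofReal ((φ t ω) ^ 2)) ∂μ < ⊤) :
    Φ₀ ^ 2 / T ≤ ∫ ω, (∫ t in Icc (0:ℝ) T, φ t ω ^ 2) ∂μ := by
  have hφL2 := hφ.1.memLp_two_uncurry (μ := μ) ae_restrict_Icc_le_right hφ2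
  have hpath : ∀ᵐ ω ∂μ, Φ₀ ^ 2 / T ≤ ∫ t in Icc (0:ℝ) T, φ t ω ^ 2 := by
    filter_upwards [hφL2.aestronglyMeasurable.prodMk_left, hφ.2.1, hφ.2.2] with ω hm hsq hsum
    have hCS := sq_integral_le_measureReal_mul_integral_sq
      ((memLp_two_iff_integrable_sq hm).2 hsq)
    rw [measureReal_restrict_apply_univ, Real.volume_real_Icc_of_le hT.le, sub_zero,
      show ∫ t in Icc (0:ℝ) T, φ t ω = -Φ₀ by linarith, neg_sq] at hCS
    rwa [div_le_iff₀ hT, mul_comm]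
  simpa using integral_mono_ae (integrable_const _) hφL2.integrable_sq.integral_prod_left hpath

theorem integral_wealth_eq_s10 [IsProbabilityMeasure μ] {Λ : ℝ} {S : ℝ → Ω → ℝ} (hT : 0 ≤ T)
    (hS : IsStronglyProgressive ℱ S) (hST : MemLp (S T) 2 μ)
    (hmart : ∀ t ∈ Icc (0:ℝ) T, μ[S T | ℱ t] =ᵐ[μ] S t)
    (hS2 : ∫⁻ ω, (∫⁻ t in Icc (0:ℝ) T, ENNReal.ofReal ((S t ω) ^ 2)) ∂μ < ⊤)
    (hφ : isAdmissible T Φ₀ ℱ μ φ)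
    (hφ2 : ∫⁻ ω, (∫⁻ t in Icc (0:ℝ) T, ENNReal.ofReal ((φ t ω) ^ 2)) ∂μ < ⊤) :
    ∫ ω, wealth T Λ Φ₀ S φ ω ∂μ = -(Λ / 2) * ∫ ω, (∫ t in Icc (0:ℝ) T, φ t ω ^ 2) ∂μ := by
  have hφL2 := hφ.1.memLp_two_uncurry (μ := μ) ae_restrict_Icc_le_right hφ2
  have hφS := hφL2.integrable_mul (hS.memLp_two_uncurry ae_restrict_Icc_le_right hS2)
  have hS0 : S 0 =ᵐ[μ] μ[S T | ℱ 0] := (hmart 0 ⟨le_rfl, hT⟩).symm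
  have hmean : ∫ ω, S 0 ω ∂μ = ∫ ω, S T ω ∂μ :=
    (integral_congr_ae hS0).trans (integral_condExp (ℱ.le 0))
  have hcross : ∫ ω, (∫ t in Icc (0:ℝ) T, φ t ω * S t ω) ∂μ = -Φ₀ * ∫ ω, S 0 ω ∂μ := by
    rw [integral_integral_mul_eq_integral_mul_of_condExp
      (IsStronglyProgressive.stronglyAdapted hφ.1) (hST.integrable one_le_two) (ae_restrict_of_forall_mem measurableSet_Icc hmart) hφS
      (hφL2.integrable_mul (hST.comp_fst _)), hmean, ← integral_const_mul]
    refine integral_congr_ae ?_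
    filter_upwards [hφ.2.2] with ω hω
    rw [show ∫ t in Icc (0:ℝ) T, φ t ω = -Φ₀ by linarith]
  have hinitInt : Integrable (fun ω => -Φ₀ * S 0 ω) μ :=
    (integrable_condExp.congr hS0.symm).const_mul _
  have hcrossInt : Integrable (fun ω => ∫ t in Icc (0:ℝ) T, φ t ω * S t ω) μ :=
    hφS.integral_prod_left
  have hcostInt : Integrable (fun ω => Λ / 2 * ∫ t in Icc (0:ℝ) T, φ t ω ^ 2) μ :=
    hφL2.integrable_sq.integral_prod_left.const_mul _
  have hprofitInt : Integrable (fun ω => -Φ₀ * S 0 ω - ∫ t in Icc (0:ℝ) T, φ t ω * S t ω) μ :=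
    hinitInt.sub hcrossInt
  simp only [wealth]
  rw [integral_sub hprofitInt hcostInt, integral_sub hinitInt hcrossInt,
    integral_const_mul, integral_const_mul, hcross]
  ring

theorem isAdmissible_const (hT : 0 < T) (ℱ : Filtration ℝ m0) (μ : Measure Ω) :
    isAdmissible T Φ₀ ℱ μ (fun _ _ => -Φ₀ / T) := by
  refine ⟨isStronglyProgressive_const ℱ _,
    ae_of_all _ fun _ => integrableOn_const measure_Icc_lt_top.ne, ?_⟩
  filter_upwards with ω
  rw [setIntegral_const, Real.volume_real_Icc_of_le hT.le, smul_eq_mul]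
  field_simp
  ring

end Liquidation

theorem stmt_10_general
    {Ω : Type*} {m0 : MeasurableSpace Ω} {μ : Measure Ω} [IsProbabilityMeasure μ]
    (T : ℝ) (hT : 0 < T) (Λ : ℝ) (hΛ : 0 < Λ) (Φ₀ : ℝ)
    (ℱ : Filtration ℝ m0)
    (S : ℝ → Ω → ℝ)
    (hprog : ProgMeasurable ℱ S)
    (hsq : ∀ t ∈ Icc (0:ℝ) T, Integrable (fun ω => (S t ω) ^ 2) μ)
    (hmart : ∀ s ∈ Icc (0:ℝ) T, ∀ t ∈ Icc (0:ℝ) T, s ≤ t → μ[S t | ℱ s] =ᵐ[μ] S s)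
    (hS2 : ∫⁻ ω, (∫⁻ t in Icc (0:ℝ) T, ENNReal.ofReal ((S t ω) ^ 2)) ∂μ < ⊤) :
    (∀ φ : ℝ → Ω → ℝ, isAdmissible T Φ₀ ℱ μ φ →
      (∫⁻ ω, (∫⁻ t in Icc (0:ℝ) T, ENNReal.ofReal ((φ t ω) ^ 2)) ∂μ < ⊤) →
      ∫ ω, wealth T Λ Φ₀ S φ ω ∂μ ≤ -Φ₀ ^ 2 * Λ / (2 * T)) ∧
    isAdmissible T Φ₀ ℱ μ (fun _ _ => -Φ₀ / T) ∧
    ∫ ω, wealth T Λ Φ₀ S (fun _ _ => -Φ₀ / T) ω ∂μ = -Φ₀ ^ 2 * Λ / (2 * T) := by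
  have hTT : T ∈ Icc (0:ℝ) T := ⟨hT.le, le_rfl⟩
  have hST : MemLp (S T) 2 μ := (memLp_two_iff_integrable_sq
    ((IsStronglyProgressive.stronglyAdapted hprog T).mono (ℱ.le T)).aestronglyMeasurable).2
    (hsq T hTT)
  have hV := fun φ (hφ : isAdmissible T Φ₀ ℱ μ φ) hφ2 =>
    integral_wealth_eq_s10 (Λ := Λ) hT.le hprog hST (fun t ht => hmart t ht T hTT ht.2) hS2 hφ hφ2
  refine ⟨fun φ hφ hφ2 => ?_, isAdmissible_const hT ℱ μ, ?_⟩
  · rw [hV φ hφ hφ2]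
    calc -(Λ / 2) * ∫ ω, (∫ t in Icc (0:ℝ) T, φ t ω ^ 2) ∂μ ≤ -(Λ / 2) * (Φ₀ ^ 2 / T) :=
          mul_le_mul_of_nonpos_left (sq_div_le_integral_setIntegral_sq hT hφ hφ2) (by linarith)
      _ = -Φ₀ ^ 2 * Λ / (2 * T) := by ring
  · rw [hV _ (isAdmissible_const hT ℱ μ) (by simp [lintegral_const, ENNReal.mul_lt_top])]
    simp only [integral_const, MeasurableSet.univ, measureReal_restrict_apply, univ_inter,
      Real.volume_real_Icc_of_le hT.le, sub_zero, smul_eq_mul, probReal_univ, one_mul]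
    field_simp

/-- Let `S` be a square-integrable martingale on `[0,T]` with
`E[∫_0^T S_t² dt] < ∞`.  Then (i) every `φ ∈ 𝒜_{Φ₀}` with `E[∫_0^T φ_t² dt] < ∞`
satisfies `E[V^{Φ₀,φ}_T] ≤ -Φ₀²Λ/(2T)`; and (ii) the constant strategy
`φ_t ≡ -Φ₀/T` belongs to `𝒜_{Φ₀}` and attains this bound: constant-rate
liquidation is optimal when the price is a martingale. -/
theorem stmt_10
    {Ω : Type*} {m0 : MeasurableSpace Ω} {μ : Measure Ω} [IsProbabilityMeasure μ]
    (T : ℝ) (hT : 0 < T) (Λ : ℝ) (hΛ : 0 < Λ) (Φ₀ : ℝ)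
    (ℱ : Filtration ℝ m0)
    (S : ℝ → Ω → ℝ)
    (hprog : ProgMeasurable ℱ S)
    (hint : ∀ t ∈ Icc (0:ℝ) T, Integrable (S t) μ)
    (hsq : ∀ t ∈ Icc (0:ℝ) T, Integrable (fun ω => (S t ω) ^ 2) μ)
    (hmart : ∀ s ∈ Icc (0:ℝ) T, ∀ t ∈ Icc (0:ℝ) T, s ≤ t → μ[S t | ℱ s] =ᵐ[μ] S s)
    (hS2 : ∫⁻ ω, (∫⁻ t in Icc (0:ℝ) T, ENNReal.ofReal ((S t ω) ^ 2)) ∂μ < ⊤) :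
    (∀ φ : ℝ → Ω → ℝ, isAdmissible T Φ₀ ℱ μ φ →
      (∫⁻ ω, (∫⁻ t in Icc (0:ℝ) T, ENNReal.ofReal ((φ t ω) ^ 2)) ∂μ < ⊤) →
      ∫ ω, wealth T Λ Φ₀ S φ ω ∂μ ≤ -Φ₀ ^ 2 * Λ / (2 * T)) ∧
    isAdmissible T Φ₀ ℱ μ (fun _ _ => -Φ₀ / T) ∧
    ∫ ω, wealth T Λ Φ₀ S (fun _ _ => -Φ₀ / T) ω ∂μ = -Φ₀ ^ 2 * Λ / (2 * T) :=
  stmt_10_general T hT Λ hΛ Φ₀ ℱ S hprog hsq hmart hS2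
end
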